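/- arXiv:quant-ph/0506210 — 8 statements merged into one kernel-verified Lean document; each statement's English description precedes it below -/
import Mathlib

section
/- Let P and Q be probability distributions on [n] with Q(i) > 0 for all i. Then the divergence D(P|Q) ≤ S(P|Q) + 1, where D(P|Q) = sup over events S ⊆ [n] of Pr_P[S] log₂(Pr_P[S]/Pr_Q[S]). -/
open Finset

/-- Pointwise: `x - y ≤ x * log (x / y)` for `x ≥ 0`, `y > 0`. -/
lemma aux_mul_log (x y : ℝ) (hx : 0 ≤ x) (hy : 0 < y) :
    x - y ≤ x * Real.log (x / y) := by
  rcases eq_or_lt_of_le hx with h | h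
  · simp [← h, hy.le]
  · have hxy : 0 < x / y := div_pos h hy
    have h1 : Real.log (y / x) ≤ y / x - 1 :=
      Real.log_le_sub_one_of_pos (div_pos hy h)
    have h2 : Real.log (y / x) = - Real.log (x / y) := by
      rw [← Real.log_inv, inv_div]
    rw [h2] at h1
    have h3 : 1 - y / x ≤ Real.log (x / y) := by linarith
    have := mul_le_mul_of_nonneg_left h3 h.le
    have hx' : x * (y / x) = y := by field_simp
    nlinarith [h.le]

/-- Log-sum inequality. -/
lemma aux_log_sum {ι : Type*} (S : Finset ι) (f g : ι → ℝ)
    (hf : ∀ i ∈ S, 0 ≤ f i) (hg : ∀ i ∈ S, 0 < g i) :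
    (∑ i ∈ S, f i) * Real.log ((∑ i ∈ S, f i) / (∑ i ∈ S, g i)) ≤
      ∑ i ∈ S, f i * Real.log (f i / g i) := by
  set A := ∑ i ∈ S, f i with hA
  set B := ∑ i ∈ S, g i with hB
  rcases eq_or_lt_of_le (Finset.sum_nonneg hf) with h0 | hApos
  · have hzero : ∀ i ∈ S, f i = 0 :=
      (Finset.sum_eq_zero_iff_of_nonneg hf).1 h0.symm
    have : ∑ i ∈ S, f i * Real.log (f i / g i) = 0 :=
      Finset.sum_eq_zero fun i hi => by rw [hzero i hi]; ring
    rw [this, show A = 0 from hA.trans h0.symm]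
    simp
  · have hSne : S.Nonempty := by
      by_contra h
      rw [Finset.not_nonempty_iff_eq_empty] at h
      simp [hA, h] at hApos
    have hBpos : 0 < B := Finset.sum_pos hg hSne
    have key : ∀ i ∈ S,
        f i * Real.log (A / B) + (f i - g i * (A / B)) ≤
          f i * Real.log (f i / g i) := by
      intro i hi
      rcases eq_or_lt_of_le (hf i hi) with h0 | hfi
      · have : 0 < g i * (A / B) := mul_pos (hg i hi) (div_pos hApos hBpos)
        simp [← h0]
        exact this.le
      · have hy : 0 < g i * (A / B) := mul_pos (hg i hi) (div_pos hApos hBpos)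
        have h1 := aux_mul_log (f i) (g i * (A / B)) (hf i hi) hy
        have h2 : Real.log (f i / (g i * (A / B))) =
            Real.log (f i / g i) - Real.log (A / B) := by
          rw [show f i / (g i * (A / B)) = (f i / g i) / (A / B) by
            field_simp]
          exact Real.log_div (div_pos hfi (hg i hi)).ne' (div_pos hApos hBpos).ne'
        rw [h2] at h1
        nlinarith
    have hsum := Finset.sum_le_sum key
    have hL : ∑ i ∈ S, (f i * Real.log (A / B) + (f i - g i * (A / B))) =
        A * Real.log (A / B) + (A - B * (A / B)) := by
      rw [Finset.sum_add_distrib, Finset.sum_sub_distrib, ← Finset.sum_mul,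
        ← Finset.sum_mul, ← hA, ← hB]
    rw [hL] at hsum
    have : B * (A / B) = A := by field_simp
    rw [this] at hsum
    linarith

/-- `-log 2 ≤ x * log x` for `0 ≤ x ≤ 1`. -/
lemma aux_xlogx (x : ℝ) (hx : 0 ≤ x) (hx1 : x ≤ 1) :
    - Real.log 2 ≤ x * Real.log x := by
  rcases eq_or_lt_of_le hx with h | h
  · simp [← h]
    exact Real.log_nonneg one_le_two
  · -- log t ≤ t * exp (-1) for t = 1/x
    have ht : 0 < 1 / x := by positivity
    have h1 : Real.log (1 / x * Real.exp (-1)) ≤ 1 / x * Real.exp (-1) - 1 :=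
      Real.log_le_sub_one_of_pos (by positivity)
    have h2 : Real.log (1 / x * Real.exp (-1)) = Real.log (1 / x) - 1 := by
      rw [Real.log_mul ht.ne' (Real.exp_ne_zero _), Real.log_exp]
      ring
    rw [h2] at h1
    have h3 : Real.log (1 / x) ≤ 1 / x * Real.exp (-1) := by linarith
    have h4 : x * Real.log (1 / x) ≤ Real.exp (-1) := by
      have := mul_le_mul_of_nonneg_left h3 h.le
      have hx' : x * (1 / x * Real.exp (-1)) = Real.exp (-1) := by field_simp
      linarith [hx' ▸ this]
    have h5 : Real.log (1 / x) = - Real.log x := by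
      rw [one_div, Real.log_inv]
    rw [h5] at h4
    have hexp : Real.exp (-1) ≤ Real.log 2 := by
      have e1 : (2.7182818283 : ℝ) < Real.exp 1 := Real.exp_one_gt_d9
      have e2 : (0.6931471803 : ℝ) < Real.log 2 := Real.log_two_gt_d9
      have : Real.exp (-1) = (Real.exp 1)⁻¹ := by
        rw [← Real.exp_neg]
      rw [this]
      have hpos : (0:ℝ) < 2.7182818283 := by norm_num
      have : (Real.exp 1)⁻¹ ≤ (2.7182818283 : ℝ)⁻¹ :=
        inv_anti₀ hpos e1.le
      calc (Real.exp 1)⁻¹ ≤ (2.7182818283 : ℝ)⁻¹ := this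
        _ ≤ 0.6931471803 := by norm_num
        _ ≤ Real.log 2 := e2.le
    linarith

/-- For probability distributions `P`, `Q` on `Fin n` with `Q` positive,
`D(P|Q) ≤ S(P|Q) + 1`, where `D(P|Q)` is the sup over events `S` of
`Pr_P[S] * log₂ (Pr_P[S] / Pr_Q[S])` (terms with `Pr_P[S] = 0` are `0`). -/
theorem stmt2 (n : ℕ) (P Q : Fin n → ℝ)
    (hP0 : ∀ i, 0 ≤ P i) (hP1 : ∑ i, P i = 1)
    (hQ0 : ∀ i, 0 < Q i) (hQ1 : ∑ i, Q i = 1) :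
    (⨆ S : Finset (Fin n),
        (∑ i ∈ S, P i) * Real.logb 2 ((∑ i ∈ S, P i) / (∑ i ∈ S, Q i))) ≤
      (∑ i, P i * Real.logb 2 (P i / Q i)) + 1 := by
  have hlog2 : (0:ℝ) < Real.log 2 := Real.log_pos one_lt_two
  apply ciSup_le
  intro S
  set p := ∑ i ∈ S, P i with hp
  set q := ∑ i ∈ S, Q i with hq
  set p' := ∑ i ∈ Sᶜ, P i with hp'
  set q' := ∑ i ∈ Sᶜ, Q i with hq'
  -- natural-log version of everything
  have h1 : p * Real.log (p / q) ≤ ∑ i ∈ S, P i * Real.log (P i / Q i) :=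
    aux_log_sum S P Q (fun i _ => hP0 i) (fun i _ => hQ0 i)
  have h2 : p' * Real.log (p' / q') ≤ ∑ i ∈ Sᶜ, P i * Real.log (P i / Q i) :=
    aux_log_sum Sᶜ P Q (fun i _ => hP0 i) (fun i _ => hQ0 i)
  have hsplit : ∑ i ∈ S, P i * Real.log (P i / Q i) +
      ∑ i ∈ Sᶜ, P i * Real.log (P i / Q i) =
      ∑ i, P i * Real.log (P i / Q i) :=
    Finset.sum_add_sum_compl S _
  -- lower bound on the complement term
  have hp'0 : 0 ≤ p' := Finset.sum_nonneg fun i _ => hP0 i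
  have hp'1 : p' ≤ 1 := by
    rw [← hP1]
    exact Finset.sum_le_sum_of_subset_of_nonneg (Finset.subset_univ _)
      (fun i _ _ => hP0 i)
  have hq'1 : q' ≤ 1 := by
    rw [← hQ1]
    exact Finset.sum_le_sum_of_subset_of_nonneg (Finset.subset_univ _)
      (fun i _ _ => (hQ0 i).le)
  have h3 : - Real.log 2 ≤ p' * Real.log (p' / q') := by
    rcases eq_or_lt_of_le hp'0 with h0 | hppos
    · rw [← h0]
      simp
      exact hlog2.le
    · have hScne : (Sᶜ : Finset (Fin n)).Nonempty := by
        by_contra h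
        rw [Finset.not_nonempty_iff_eq_empty] at h
        simp [hp', h] at hppos
      have hq'pos : 0 < q' := Finset.sum_pos (fun i _ => hQ0 i) hScne
      have hlq' : Real.log q' ≤ 0 := Real.log_nonpos hq'pos.le hq'1
      have : Real.log (p' / q') = Real.log p' - Real.log q' :=
        Real.log_div hppos.ne' hq'pos.ne'
      rw [this]
      have hxlx := aux_xlogx p' hp'0 hp'1
      nlinarith
  -- combine
  have hmain : p * Real.log (p / q) ≤
      (∑ i, P i * Real.log (P i / Q i)) + Real.log 2 := by
    linarith
  -- convert to logb
  have hlogb : ∀ x y : ℝ, x * Real.logb 2 y = x * Real.log y / Real.log 2 := by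
    intro x y
    rw [Real.logb, mul_div_assoc]
  rw [hlogb]
  have hRHS : (∑ i, P i * Real.logb 2 (P i / Q i)) + 1 =
      ((∑ i, P i * Real.log (P i / Q i)) + Real.log 2) / Real.log 2 := by
    rw [add_div, Finset.sum_div]
    congr 1
    · exact Finset.sum_congr rfl fun i _ => hlogb _ _
    · rw [div_self hlog2.ne']
  rw [hRHS]
  exact div_le_div_of_nonneg_right hmain hlog2.le
end

section
/- Let P and Q be probability distributions on the finite set [n] (with n ≥ 2) such that Q(i) > 0 for all i. Then the relative entropy satisfies S(P|Q) ≤ D(P|Q) · (n - 1), where D(P|Q) is the divergence. -/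
open Finset

/-- For probability distributions `P`, `Q` on `Fin n` (`n ≥ 2`) with `Q`
positive, the relative entropy satisfies `S(P|Q) ≤ D(P|Q) * (n - 1)`. -/
theorem stmt4 (n : ℕ) (hn : 2 ≤ n) (P Q : Fin n → ℝ)
    (hP0 : ∀ i, 0 ≤ P i) (hP1 : ∑ i, P i = 1)
    (hQ0 : ∀ i, 0 < Q i) (hQ1 : ∑ i, Q i = 1) :
    ∑ i, P i * Real.logb 2 (P i / Q i) ≤
      (⨆ S : Finset (Fin n),
        (∑ i ∈ S, P i) * Real.logb 2 ((∑ i ∈ S, P i) / (∑ i ∈ S, Q i))) *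
        ((n : ℝ) - 1) := by
  have : NeZero n := ⟨by omega⟩
  set f : Finset (Fin n) → ℝ := fun S =>
    (∑ i ∈ S, P i) * Real.logb 2 ((∑ i ∈ S, P i) / (∑ i ∈ S, Q i)) with hf
  set D := ⨆ S : Finset (Fin n), f S with hD
  have hbdd : BddAbove (Set.range f) := Set.Finite.bddAbove (Set.finite_range f)
  have hfle : ∀ S, f S ≤ D := fun S => le_ciSup hbdd S
  have hD0 : 0 ≤ D := by
    have h0 : f Finset.univ = 0 := by simp [hf, hP1, hQ1]
    calc (0 : ℝ) = f Finset.univ := h0.symm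
      _ ≤ D := hfle _
  set g : Fin n → ℝ := fun i => P i * Real.logb 2 (P i / Q i) with hg
  have hle : ∀ i, g i ≤ D := by
    intro i
    have := hfle {i}
    simpa [hf, hg] using this
  set T : Finset (Fin n) := Finset.univ.filter (fun i => 0 < g i) with hT
  have hsplit : ∑ i, g i
      = ∑ i ∈ T, g i + ∑ i ∈ Finset.univ.filter (fun i => ¬ 0 < g i), g i :=
    (Finset.sum_filter_add_sum_filter_not _ _ _).symm
  have hneg : ∑ i ∈ Finset.univ.filter (fun i => ¬ 0 < g i), g i ≤ 0 :=
    Finset.sum_nonpos (fun i hi => le_of_not_gt (Finset.mem_filter.mp hi).2)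
  have hTne : T ≠ Finset.univ := by
    intro h
    have hall : ∀ i, 0 < g i := by
      intro i
      have hi : i ∈ T := h ▸ Finset.mem_univ i
      exact (Finset.mem_filter.mp hi).2
    have hgt : ∀ i, Q i < P i := by
      intro i
      have hgi : 0 < P i * Real.logb 2 (P i / Q i) := hall i
      have hPpos : 0 < P i := by
        rcases (hP0 i).lt_or_eq with h' | h'
        · exact h'
        · exfalso; rw [← h'] at hgi; simp at hgi
      have hlog : 0 < Real.logb 2 (P i / Q i) := by
        by_contra hc
        push_neg at hc
        have h2 : P i * Real.logb 2 (P i / Q i) ≤ 0 :=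
          mul_nonpos_of_nonneg_of_nonpos (hP0 i) hc
        linarith
      have h1 : 1 < P i / Q i := by
        by_contra hc
        push_neg at hc
        have h2 : Real.logb 2 (P i / Q i) ≤ 0 :=
          Real.logb_nonpos (by norm_num) (div_nonneg (hP0 i) (hQ0 i).le) hc
        linarith
      calc Q i = 1 * Q i := (one_mul _).symm
        _ < (P i / Q i) * Q i := mul_lt_mul_of_pos_right h1 (hQ0 i)
        _ = P i := div_mul_cancel₀ _ (hQ0 i).ne'
    have hlt : ∑ i, Q i < ∑ i, P i :=
      Finset.sum_lt_sum_of_nonempty Finset.univ_nonempty (fun i _ => hgt i)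
    rw [hP1, hQ1] at hlt
    exact lt_irrefl _ hlt
  have hcard : (T.card : ℝ) ≤ (n : ℝ) - 1 := by
    have h1 : T.card < n := by
      have := Finset.card_lt_card (Finset.ssubset_univ_iff.mpr hTne)
      simpa using this
    have h2 : T.card ≤ n - 1 := Nat.le_pred_of_lt h1
    have h3 : (T.card : ℝ) ≤ ((n - 1 : ℕ) : ℝ) := Nat.cast_le.mpr h2
    rwa [Nat.cast_sub (by omega), Nat.cast_one] at h3
  calc ∑ i, g i ≤ ∑ i ∈ T, g i := by rw [hsplit]; linarith
    _ ≤ ∑ _i ∈ T, D := Finset.sum_le_sum (fun i _ => hle i)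
    _ = T.card • D := Finset.sum_const D
    _ = (T.card : ℝ) * D := nsmul_eq_mul _ _
    _ ≤ ((n : ℝ) - 1) * D := mul_le_mul_of_nonneg_right hcard hD0
    _ = D * ((n : ℝ) - 1) := mul_comm _ _
end

section
/- For every n ≥ 3 and every k > 0, there exist probability distributions P and Q on [n] with Q(i) > 0 for all i, such that P and Q satisfy the classical k-substate property (hence D(P|Q) ≤ 2k + 2) while S(P|Q) > k(n - 2) - 1. Consequently S(P|Q) > (D(P|Q)/2 - 1)(n - 2) - 1. -/
/-!
`P` is a truncated geometric distribution with ratio `1 / a`, and `Q` shrinks its atom `i ≥ 1` by the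
factor `2 ^ (k * a ^ i)`, the leftover mass going to atom `0`. Each atom `i ≥ 1` then contributes
`P i * k * a ^ i = k * (1 - 1 / a)` to `S(P|Q)`, which is therefore about `k * (n - 1) * (1 - 1 / a)`.
On the other hand the atoms with `a ^ i > r` carry `P`-mass below `1 / r`, so conditioning `P` on the
remaining ones witnesses the `k`-substate property, and an event with least atom `j` has `P`-mass at
most `a⁻¹ ^ j`, which keeps its term in `D(P|Q)` below `1 + k`. Take `a = n`.
-/

open Finset

/-- The classical `k`-substate property for distributions on `Fin n`:
for every `r > 1` there is a distribution `P_r` with `‖P - P_r‖₁ ≤ 2/r` and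
`(1 - 1/r) * P_r i / 2^(r*k) ≤ Q i` for all `i`. -/
def SubstateProperty (n : ℕ) (P Q : Fin n → ℝ) (k : ℝ) : Prop :=
  ∀ r : ℝ, 1 < r → ∃ Pr : Fin n → ℝ,
    (∀ i, 0 ≤ Pr i) ∧ (∑ i, Pr i = 1) ∧
    (∑ i, |P i - Pr i|) ≤ 2 / r ∧
    ∀ i, (1 - 1 / r) * Pr i / (2 : ℝ) ^ (r * k) ≤ Q i

/-- The divergence `D(P|Q)`: sup over events `S` of
`Pr_P[S] * log₂ (Pr_P[S] / Pr_Q[S])`. -/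
noncomputable def Dv (n : ℕ) (P Q : Fin n → ℝ) : ℝ :=
  ⨆ S : Finset (Fin n),
    (∑ i ∈ S, P i) * Real.logb 2 ((∑ i ∈ S, P i) / (∑ i ∈ S, Q i))

open Real

noncomputable def fillAtZero {n : ℕ} [NeZero n] (f : Fin n → ℝ) (i : Fin n) : ℝ :=
  if i = 0 then 1 - ∑ j ∈ univ.erase 0, f j else f i

section FillAtZero

variable {n : ℕ} [NeZero n]

@[simp]
lemma fillAtZero_of_ne {f : Fin n → ℝ} {i : Fin n} (hi : i ≠ 0) : fillAtZero f i = f i :=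
  if_neg hi

lemma fillAtZero_zero (f : Fin n → ℝ) : fillAtZero f 0 = 1 - ∑ j ∈ univ.erase 0, f j :=
  if_pos rfl

lemma sum_fillAtZero (f : Fin n → ℝ) : ∑ i, fillAtZero f i = 1 := by
  rw [← add_sum_erase _ _ (mem_univ 0), fillAtZero_zero,
    sum_congr rfl fun i hi => fillAtZero_of_ne (ne_of_mem_erase hi)]
  ring

lemma fillAtZero_zero_le_fillAtZero_zero {f g : Fin n → ℝ} (hfg : ∀ i ≠ 0, f i ≤ g i) :
    fillAtZero g 0 ≤ fillAtZero f 0 := by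
  rw [fillAtZero_zero, fillAtZero_zero]
  gcongr with i hi
  exact hfg i (ne_of_mem_erase hi)

end FillAtZero

/-- `P_r` is `P` conditioned on `A`. -/
lemma substateProperty_of_exists_finset {n : ℕ} {P Q : Fin n → ℝ} {k : ℝ}
    (hP : ∀ i, 0 ≤ P i) (hP_sum : ∑ i, P i = 1) (hQ : ∀ i, 0 ≤ Q i)
    (h : ∀ r : ℝ, 1 < r → ∃ A : Finset (Fin n),
      ∑ i ∈ Aᶜ, P i ≤ 1 / r ∧ ∀ i ∈ A, P i ≤ 2 ^ (r * k) * Q i) :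
    SubstateProperty n P Q k := by
  intro r hr
  obtain ⟨A, hAc, hA⟩ := h r hr
  set c := ∑ i ∈ A, P i
  have hsplit : c + ∑ i ∈ Aᶜ, P i = 1 := (sum_add_sum_compl A P).trans hP_sum
  have hc : 1 - 1 / r ≤ c := by linarith
  have hc_pos : 0 < c := hc.trans_lt' (by rw [sub_pos, div_lt_one] <;> linarith)
  have hc_le : c ≤ 1 := by linarith [sum_nonneg fun i (_ : i ∈ Aᶜ) => hP i]
  refine ⟨fun i => if i ∈ A then P i / c else 0, fun i => ?_, ?_, ?_, fun i => ?_⟩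
  · dsimp only
    split_ifs
    · exact div_nonneg (hP i) hc_pos.le
    · exact le_rfl
  · rw [← sum_filter, filter_mem_eq_inter, univ_inter, ← sum_div, div_self hc_pos.ne']
  · have hin : ∀ i ∈ A, |P i - if i ∈ A then P i / c else 0| = P i / c - P i := fun i hi => by
      rw [if_pos hi, abs_sub_comm, abs_of_nonneg (sub_nonneg.2 (le_div_self (hP i) hc_pos hc_le))]
    have hout : ∀ i ∈ Aᶜ, |P i - if i ∈ A then P i / c else 0| = P i := fun i hi => by
      rw [if_neg (mem_compl.1 hi), sub_zero, abs_of_nonneg (hP i)]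
    rw [← sum_add_sum_compl A, sum_congr rfl hin, sum_congr rfl hout, sum_sub_distrib, ← sum_div,
      div_self hc_pos.ne']
    change 1 - c + ∑ i ∈ Aᶜ, P i ≤ 2 / r
    linarith [show 2 / r = 2 * (1 / r) by ring]
  · dsimp only
    split_ifs with hi
    · calc (1 - 1 / r) * (P i / c) / 2 ^ (r * k) ≤ c * (P i / c) / 2 ^ (r * k) := by
            gcongr
            exact div_nonneg (hP i) hc_pos.le
        _ = P i / 2 ^ (r * k) := by rw [mul_div_cancel₀ _ hc_pos.ne']
        _ ≤ Q i := by rw [div_le_iff₀' (by positivity)]; exact hA i hi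
    · simpa using hQ i

noncomputable def relEntropy {n : ℕ} (P Q : Fin n → ℝ) : ℝ :=
  ∑ i, P i * logb 2 (P i / Q i)

lemma mul_logb_div_le_mul_logb_div {b p q s t : ℝ} (hb : 1 < b) (hp : 0 < p) (hs : 0 < s)
    (hsq : s ≤ q) (hpt : p ≤ t) (hst : s ≤ t) : p * logb b (p / q) ≤ t * logb b (t / s) := by
  have hlog : logb b (p / q) ≤ logb b (t / s) :=
    logb_le_logb_of_le hb (div_pos hp (hs.trans_le hsq)) (div_le_div₀ (hp.le.trans hpt) hpt hs hsq)
  have hlog_nonneg : 0 ≤ logb b (t / s) := logb_nonneg hb ((one_le_div hs).2 hst)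
  calc p * logb b (p / q) ≤ p * logb b (t / s) := by gcongr
    _ ≤ t * logb b (t / s) := by gcongr

lemma neg_one_le_mul_logb_div {p q : ℝ} (hp : 1 / 2 ≤ p) (hp1 : p ≤ 1) (hq : 0 < q)
    (hq1 : q ≤ 1) : -1 ≤ p * logb 2 (p / q) := by
  have hlog : -1 ≤ logb 2 (p / q) := by
    calc (-1 : ℝ) = logb 2 (1 / 2) := by
          rw [one_div, logb_inv, logb_self_eq_one one_lt_two]
      _ ≤ logb 2 (p / q) := logb_le_logb_of_le one_lt_two (by norm_num)
          (hp.trans (le_div_self (by linarith) hq hq1))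
  nlinarith

/-- The paper's witness with atoms indexed from `0`, except that the paper's last atom `1 / a ^ (n - 1)`
keeps only `(a - 1) / a ^ n` and passes `1 / a ^ n` on to atom `0`: every atom `i ≥ 1` then has mass
`(a - 1) / a ^ (i + 1) = a⁻¹ ^ i - a⁻¹ ^ (i + 1)`. -/
noncomputable def witnessP (n : ℕ) [NeZero n] (a : ℝ) : Fin n → ℝ :=
  fillAtZero fun i => a⁻¹ ^ (i : ℕ) - a⁻¹ ^ ((i : ℕ) + 1)

noncomputable def witnessQ (n : ℕ) [NeZero n] (a k : ℝ) : Fin n → ℝ :=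
  fillAtZero fun i => witnessP n a i / 2 ^ (k * a ^ (i : ℕ))

section Witness

variable {n : ℕ} [NeZero n] {a k : ℝ}

lemma witnessP_of_ne {i : Fin n} (hi : i ≠ 0) :
    witnessP n a i = a⁻¹ ^ (i : ℕ) - a⁻¹ ^ ((i : ℕ) + 1) :=
  fillAtZero_of_ne hi

lemma witnessP_zero : witnessP n a 0 = 1 - a⁻¹ + a⁻¹ ^ n := by
  have htelescope : ∑ i : Fin n, (a⁻¹ ^ (i : ℕ) - a⁻¹ ^ ((i : ℕ) + 1)) = 1 - a⁻¹ ^ n := by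
    rw [Fin.sum_univ_eq_sum_range (fun i => a⁻¹ ^ i - a⁻¹ ^ (i + 1)), sum_range_sub', pow_zero]
  rw [witnessP, fillAtZero_zero, sum_erase_eq_sub (mem_univ 0), htelescope]
  simp only [Fin.val_zero, pow_zero, zero_add, pow_one]
  ring

lemma witnessP_pos (ha : 1 < a) (i : Fin n) : 0 < witnessP n a i := by
  have hx : 0 < a⁻¹ := inv_pos.2 (by linarith)
  have hx1 : a⁻¹ < 1 := inv_lt_one_of_one_lt₀ ha
  by_cases hi : i = 0
  · rw [hi, witnessP_zero]
    have := pow_pos hx n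
    linarith
  · rw [witnessP_of_ne hi, sub_pos]
    exact pow_lt_pow_right_of_lt_one₀ hx hx1 (Nat.lt_succ_self _)

lemma one_half_le_witnessP_zero (ha : 2 ≤ a) : 1 / 2 ≤ witnessP n a 0 := by
  have hx : a⁻¹ ≤ 1 / 2 := by rw [one_div]; exact inv_anti₀ two_pos ha
  have := pow_nonneg (inv_nonneg.2 (zero_le_two.trans ha)) n
  rw [witnessP_zero]
  linarith

lemma inv_pow_le_two_mul_witnessP (ha : 2 ≤ a) {i : Fin n} (hi : i ≠ 0) :
    a⁻¹ ^ (i : ℕ) ≤ 2 * witnessP n a i := by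
  have hx : a⁻¹ ≤ 1 / 2 := by rw [one_div]; exact inv_anti₀ two_pos ha
  have := pow_nonneg (inv_nonneg.2 (zero_le_two.trans ha)) (i : ℕ)
  rw [witnessP_of_ne hi, pow_succ]
  nlinarith

lemma sum_witnessP_le_inv_pow (ha : 1 < a) {S : Finset (Fin n)} {j : ℕ} (hj : j ≠ 0)
    (hS : ∀ i ∈ S, j ≤ (i : ℕ)) : ∑ i ∈ S, witnessP n a i ≤ a⁻¹ ^ j := by
  set g : ℕ → ℝ := fun m => a⁻¹ ^ m - a⁻¹ ^ (m + 1)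
  have hx : 0 ≤ a⁻¹ := inv_nonneg.2 (by linarith)
  have hg : ∀ m, 0 ≤ g m := fun m =>
    sub_nonneg.2 (pow_le_pow_of_le_one hx (inv_le_one_of_one_le₀ ha.le) (Nat.le_succ m))
  calc ∑ i ∈ S, witnessP n a i = ∑ m ∈ S.map Fin.valEmbedding, g m := by
        rw [sum_map]
        exact sum_congr rfl fun i hi =>
          witnessP_of_ne fun h => hj (Nat.le_zero.1 (by simpa [h] using hS i hi))
    _ ≤ ∑ m ∈ Ico j (j + n), g m := by
        refine sum_le_sum_of_subset_of_nonneg (fun m hm => ?_) fun m _ _ => hg m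
        obtain ⟨i, hi, rfl⟩ := mem_map.1 hm
        exact mem_Ico.2 ⟨hS i hi, by simp only [Fin.valEmbedding_apply]; omega⟩
    _ = a⁻¹ ^ j - a⁻¹ ^ (j + n) := by
        rw [sum_Ico_eq_sub _ (Nat.le_add_right j n), sum_range_sub', sum_range_sub']
        ring
    _ ≤ a⁻¹ ^ j := sub_le_self _ (pow_nonneg hx _)

lemma witnessQ_of_ne {i : Fin n} (hi : i ≠ 0) :
    witnessQ n a k i = witnessP n a i / 2 ^ (k * a ^ (i : ℕ)) :=
  fillAtZero_of_ne hi

lemma witnessP_zero_le_witnessQ_zero (ha : 1 < a) (hk : 0 ≤ k) :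
    witnessP n a 0 ≤ witnessQ n a k 0 :=
  fillAtZero_zero_le_fillAtZero_zero fun i hi => by
    rw [← witnessP_of_ne hi]
    exact div_le_self (witnessP_pos ha i).le
      (one_le_rpow one_le_two (mul_nonneg hk (pow_nonneg (by linarith) _)))

lemma witnessQ_pos (ha : 1 < a) (hk : 0 ≤ k) (i : Fin n) : 0 < witnessQ n a k i := by
  by_cases hi : i = 0
  · exact hi ▸ (witnessP_pos ha 0).trans_le (witnessP_zero_le_witnessQ_zero ha hk)
  · rw [witnessQ_of_ne hi]
    exact div_pos (witnessP_pos ha i) (rpow_pos_of_pos two_pos _)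

lemma witnessP_le_rpow_mul_witnessQ (ha : 1 < a) (hk : 0 ≤ k) (i : Fin n) :
    witnessP n a i ≤ 2 ^ (k * a ^ (i : ℕ)) * witnessQ n a k i := by
  by_cases hi : i = 0
  · subst hi
    rw [Fin.val_zero, pow_zero, mul_one]
    exact (witnessP_zero_le_witnessQ_zero ha hk).trans
      (le_mul_of_one_le_left (witnessQ_pos ha hk 0).le (one_le_rpow one_le_two hk))
  · rw [witnessQ_of_ne hi, mul_div_cancel₀ _ (rpow_pos_of_pos two_pos _).ne']

lemma logb_witnessP_div_witnessQ (ha : 1 < a) {i : Fin n} (hi : i ≠ 0) :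
    logb 2 (witnessP n a i / witnessQ n a k i) = k * a ^ (i : ℕ) := by
  rw [witnessQ_of_ne hi, div_div_cancel₀ (witnessP_pos ha i).ne', logb_rpow two_pos (by norm_num)]

lemma witnessQ_le_inv_pow (ha : 1 < a) (hk : 0 ≤ k) {i : Fin n} (hi : i ≠ 0) :
    witnessQ n a k i ≤ a⁻¹ ^ (i : ℕ) := by
  rw [witnessQ_of_ne hi]
  refine (div_le_self (witnessP_pos ha i).le
    (one_le_rpow one_le_two (mul_nonneg hk (pow_nonneg (by linarith) _)))).trans ?_
  rw [witnessP_of_ne hi]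
  exact sub_le_self _ (pow_nonneg (inv_nonneg.2 (by linarith)) _)

lemma logb_inv_pow_div_witnessQ_le (ha : 2 ≤ a) {i : Fin n} (hi : i ≠ 0) :
    logb 2 (a⁻¹ ^ (i : ℕ) / witnessQ n a k i) ≤ 1 + k * a ^ (i : ℕ) := by
  have hP := witnessP_pos (by linarith) i
  have hW : 0 < (2 : ℝ) ^ (k * a ^ (i : ℕ)) := rpow_pos_of_pos two_pos _
  have hratio : a⁻¹ ^ (i : ℕ) / witnessQ n a k i ≤ 2 ^ (1 + k * a ^ (i : ℕ)) := by
    rw [witnessQ_of_ne hi, div_div_eq_mul_div, div_le_iff₀ hP, rpow_add two_pos, rpow_one]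
    nlinarith [inv_pow_le_two_mul_witnessP ha hi]
  calc _ ≤ logb 2 (2 ^ (1 + k * a ^ (i : ℕ))) := by
        refine logb_le_logb_of_le one_lt_two (div_pos (pow_pos ?_ _) ?_) hratio
        · exact inv_pos.2 (by linarith)
        · rw [witnessQ_of_ne hi]
          exact div_pos hP hW
    _ = 1 + k * a ^ (i : ℕ) := logb_rpow two_pos (by norm_num)

lemma substateProperty_witness (ha : 1 < a) (hk : 0 ≤ k) :
    SubstateProperty n (witnessP n a) (witnessQ n a k) k := by
  refine substateProperty_of_exists_finset (fun i => (witnessP_pos ha i).le) (sum_fillAtZero _)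
    (fun i => (witnessQ_pos ha hk i).le) fun r hr =>
      ⟨univ.filter fun i => a ^ (i : ℕ) ≤ r, ?_, fun i hi => ?_⟩
  · rcases (univ.filter fun i : Fin n => a ^ (i : ℕ) ≤ r)ᶜ.eq_empty_or_nonempty with h | h
    · rw [h, sum_empty]
      positivity
    · have hj : r < a ^ ((min' _ h : Fin n) : ℕ) := by simpa using min'_mem _ h
      have hj0 : ((min' _ h : Fin n) : ℕ) ≠ 0 := fun h0 => by
        rw [h0, pow_zero] at hj
        linarith
      calc _ ≤ a⁻¹ ^ ((min' _ h : Fin n) : ℕ) :=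
            sum_witnessP_le_inv_pow ha hj0 fun i hi => min'_le _ _ hi
        _ ≤ 1 / r := by
            rw [inv_pow, one_div]
            exact inv_anti₀ (by linarith) hj.le
  · have hir : k * a ^ (i : ℕ) ≤ r * k := by
      rw [mul_comm r]
      exact mul_le_mul_of_nonneg_left (mem_filter.1 hi).2 hk
    exact (witnessP_le_rpow_mul_witnessQ ha hk i).trans
      (mul_le_mul_of_nonneg_right (rpow_le_rpow_of_exponent_le one_le_two hir)
        (witnessQ_pos ha hk i).le)

/-- For an event `S` with least atom `j ≥ 1`, `P(S) ≤ a⁻¹ ^ j` and `Q(S) ≥ Q j`, so its term is at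
most `a⁻¹ ^ j * log₂ (a⁻¹ ^ j / Q j) ≤ a⁻¹ ^ j + k`; an event containing `0` has `Q(S) ≥ 1 / 2`. -/
lemma dv_witness_le (ha : 2 ≤ a) (hk : 0 ≤ k) :
    Dv n (witnessP n a) (witnessQ n a k) ≤ k + 1 := by
  have ha1 : 1 < a := by linarith
  refine ciSup_le fun S => ?_
  rcases S.eq_empty_or_nonempty with rfl | hS
  · simp only [sum_empty, zero_mul]
    linarith
  set j := S.min' hS
  have hp : 0 < ∑ i ∈ S, witnessP n a i := sum_pos (fun i _ => witnessP_pos ha1 i) hS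
  have hqj : witnessQ n a k j ≤ ∑ i ∈ S, witnessQ n a k i :=
    single_le_sum (fun i _ => (witnessQ_pos ha1 hk i).le) (min'_mem S hS)
  by_cases hj : j = 0
  · have hq : 1 / 2 ≤ ∑ i ∈ S, witnessQ n a k i :=
      (one_half_le_witnessP_zero ha).trans <|
        (witnessP_zero_le_witnessQ_zero ha1 hk).trans (hj ▸ hqj)
    have hp1 : ∑ i ∈ S, witnessP n a i ≤ 1 :=
      (sum_le_sum_of_subset_of_nonneg (subset_univ S) fun i _ _ =>
        (witnessP_pos ha1 i).le).trans_eq (sum_fillAtZero _)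
    calc _ ≤ 1 * logb 2 (1 / (1 / 2)) :=
          mul_logb_div_le_mul_logb_div one_lt_two hp (by norm_num) hq hp1 (by norm_num)
      _ = 1 := by rw [one_div_one_div, one_mul, logb_self_eq_one one_lt_two]
      _ ≤ k + 1 := by linarith
  · have hj' : (j : ℕ) ≠ 0 := Fin.val_ne_zero_iff.2 hj
    calc _ ≤ a⁻¹ ^ (j : ℕ) * logb 2 (a⁻¹ ^ (j : ℕ) / witnessQ n a k j) :=
          mul_logb_div_le_mul_logb_div one_lt_two hp (witnessQ_pos ha1 hk j) hqj
            (sum_witnessP_le_inv_pow ha1 hj' fun i hi => min'_le S i hi)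
            (witnessQ_le_inv_pow ha1 hk hj)
      _ ≤ a⁻¹ ^ (j : ℕ) * (1 + k * a ^ (j : ℕ)) := by
          gcongr
          exact logb_inv_pow_div_witnessQ_le ha hj
      _ = a⁻¹ ^ (j : ℕ) + k := by
          rw [mul_add, mul_one, mul_left_comm, inv_pow, inv_mul_cancel₀ (by positivity), mul_one]
      _ ≤ k + 1 := by
          linarith [pow_le_one₀ (inv_nonneg.2 (by linarith)) (inv_le_one_of_one_le₀ ha1.le)
            (n := (j : ℕ))]

lemma relEntropy_witness (ha : 1 < a) :
    relEntropy (witnessP n a) (witnessQ n a k) =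
      witnessP n a 0 * logb 2 (witnessP n a 0 / witnessQ n a k 0) + (n - 1) * (k * (1 - a⁻¹)) := by
  have hterm : ∀ i ∈ univ.erase (0 : Fin n),
      witnessP n a i * logb 2 (witnessP n a i / witnessQ n a k i) = k * (1 - a⁻¹) := by
    intro i hi
    have hi0 := ne_of_mem_erase hi
    have ha0 : a ≠ 0 := by positivity
    rw [logb_witnessP_div_witnessQ ha hi0, witnessP_of_ne hi0, pow_succ, inv_pow]
    field_simp
  rw [relEntropy, ← add_sum_erase _ _ (mem_univ 0), sum_congr rfl hterm, sum_const,
    card_erase_of_mem (mem_univ 0), card_univ, Fintype.card_fin, nsmul_eq_mul,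
    Nat.cast_pred (Nat.pos_of_neZero n)]

lemma relEntropy_witness_ge (ha : 2 ≤ a) (hk : 0 ≤ k) :
    (n - 1) * (k * (1 - a⁻¹)) - 1 ≤ relEntropy (witnessP n a) (witnessQ n a k) := by
  have ha1 : 1 < a := by linarith
  have hle_one : ∀ P : Fin n → ℝ, (∀ i, 0 < P i) → ∑ i, P i = 1 → P 0 ≤ 1 := fun P hP hsum =>
    (single_le_sum (fun i _ => (hP i).le) (mem_univ 0)).trans_eq hsum
  have hzero := neg_one_le_mul_logb_div (one_half_le_witnessP_zero ha)
    (hle_one _ (witnessP_pos ha1) (sum_fillAtZero _)) (witnessQ_pos ha1 hk 0)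
    (hle_one _ (witnessQ_pos ha1 hk) (sum_fillAtZero _))
  rw [relEntropy_witness ha1]
  linarith

end Witness

/-- For every `n ≥ 3` and `k > 0` there are distributions `P`, `Q` on `Fin n`
with `Q` positive satisfying the classical `k`-substate property (hence
`D(P|Q) ≤ 2k + 2`) while `S(P|Q) > k(n-2) - 1`; consequently
`S(P|Q) > (D(P|Q)/2 - 1)(n-2) - 1`. -/
theorem stmt5 (n : ℕ) (hn : 3 ≤ n) (k : ℝ) (hk : 0 < k) :
    ∃ P Q : Fin n → ℝ,
      (∀ i, 0 ≤ P i) ∧ (∑ i, P i = 1) ∧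
      (∀ i, 0 < Q i) ∧ (∑ i, Q i = 1) ∧
      SubstateProperty n P Q k ∧
      Dv n P Q ≤ 2 * k + 2 ∧
      (∑ i, P i * Real.logb 2 (P i / Q i)) > k * ((n : ℝ) - 2) - 1 ∧
      (∑ i, P i * Real.logb 2 (P i / Q i)) >
        (Dv n P Q / 2 - 1) * ((n : ℝ) - 2) - 1 := by
  have : NeZero n := ⟨by omega⟩
  have h3 : (3 : ℝ) ≤ n := by exact_mod_cast hn
  have hDv : Dv n (witnessP n n) (witnessQ n n k) ≤ 2 * k + 2 :=
    (dv_witness_le (by linarith) hk.le).trans (by linarith)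
  have hS : k * ((n : ℝ) - 2) - 1 < relEntropy (witnessP n n) (witnessQ n n k) := by
    refine lt_of_lt_of_le ?_ (relEntropy_witness_ge (by linarith) hk.le)
    have : ((n : ℝ) - 1) * (1 - (n : ℝ)⁻¹) = n - 2 + (n : ℝ)⁻¹ := by
      field_simp
      ring
    rw [mul_left_comm, this]
    nlinarith [inv_pos.2 (show (0 : ℝ) < n by linarith)]
  refine ⟨witnessP n n, witnessQ n n k, fun i => (witnessP_pos (by linarith) i).le,
    sum_fillAtZero _, witnessQ_pos (by linarith) hk.le, sum_fillAtZero _,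
    substateProperty_witness (by linarith) hk.le, hDv, hS, hS.trans_le' ?_⟩
  have := mul_le_mul_of_nonneg_right (show Dv n (witnessP n n) (witnessQ n n k) / 2 - 1 ≤ k by
    linarith) (show (0 : ℝ) ≤ n - 2 by linarith)
  linarith
end

section
/- Fix a > 1, k > 0, n ≥ 2, and define P by p₁ = (a-1)/a, pᵢ = (a-1)/aⁱ (2 ≤ i ≤ n-1), pₙ = 1/a^{n-1}, and Q by qᵢ = pᵢ/2^{k a^{i-1}} for i ≥ 2, q₁ = 1 - Σ_{i=2}^n qᵢ. Then S(P|Q) > -1 + (n-2)·k(a-1)/a + k = k(n-1) - k(n-2)/a - 1. -/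
/-!
For `i ≥ 2` the ratio `pᵢ / qᵢ` is exactly `2^(k a^(i-1))`, so these terms of `S(P|Q)` sum to
`∑ pᵢ k a^(i-1)`, which telescopes to `(n-2) k (a-1)/a + k`. Since `∑_{i≥2} qᵢ < ∑_{i≥2} pᵢ = 1/a`,
the weight `q₁` lies in `(0, 1]`, whence `p₁ log₂ (p₁/q₁) ≥ p₁ log₂ p₁ ≥ -1/(e log 2) > -1`.
-/

open Finset Real

lemma neg_exp_neg_one_le_mul_log {x : ℝ} (hx : 0 < x) : -exp (-1) ≤ x * log x := by
  have h := log_le_sub_one_of_pos (show 0 < exp (-1) / x by positivity)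
  rw [log_div (exp_pos _).ne' hx.ne', log_exp] at h
  have : -log x ≤ exp (-1) / x := by linarith
  rw [le_div_iff₀ hx] at this
  linarith

lemma neg_one_lt_mul_logb_two {x : ℝ} (hx : 0 < x) : -1 < x * logb 2 x := by
  have exp_neg_one_lt : exp (-1) < log 2 := by
    have : exp (-1) < 1 / 2 := by
      rw [exp_neg, inv_lt_comm₀ (exp_pos 1) (by norm_num)]
      linarith [exp_one_gt_d9]
    linarith [log_two_gt_d9]
  rw [logb, mul_div_assoc', lt_div_iff₀ (log_pos one_lt_two)]
  linarith [neg_exp_neg_one_le_mul_log hx]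

lemma neg_one_lt_mul_logb_div {p q : ℝ} (hp : 0 < p) (hq : 0 < q) (hq₁ : q ≤ 1) :
    -1 < p * logb 2 (p / q) :=
  calc -1 < p * logb 2 p := neg_one_lt_mul_logb_two hp
    _ ≤ p * logb 2 (p / q) :=
      mul_le_mul_of_nonneg_left (logb_le_logb_of_le one_lt_two hp (le_div_self hp.le hq hq₁)) hp.le

lemma mul_logb_div_div_rpow {b : ℝ} (hb : 0 < b) (hb₁ : b ≠ 1) (p t : ℝ) :
    p * logb b (p / (p / b ^ t)) = p * t := by
  rcases eq_or_ne p 0 with rfl | hp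
  · simp
  · rw [div_div_cancel₀ hp, logb_rpow hb hb₁]

theorem neg_one_add_sum_lt_sum_mul_logb_div {m : ℕ} (p q : Fin (m + 1) → ℝ) (t : Fin m → ℝ)
    (hp₀ : 0 < p 0) (hp : ∀ i : Fin m, 0 ≤ p i.succ) (ht : ∀ i, 0 ≤ t i)
    (hsum : ∑ i : Fin m, p i.succ < 1) (hq : ∀ i : Fin m, q i.succ = p i.succ / 2 ^ t i)
    (hq₀ : q 0 = 1 - ∑ i : Fin m, q i.succ) :
    -1 + ∑ i : Fin m, p i.succ * t i < ∑ i, p i * logb 2 (p i / q i) := by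
  have hq_nonneg : ∀ i : Fin m, 0 ≤ q i.succ := fun i => by
    rw [hq]; exact div_nonneg (hp i) (by positivity)
  have hq_le : ∀ i : Fin m, q i.succ ≤ p i.succ := fun i => by
    rw [hq]; exact div_le_self (hp i) (one_le_rpow one_le_two (ht i))
  have hq₀_pos : 0 < q 0 := by rw [hq₀]; linarith [sum_le_sum fun i (_ : i ∈ univ) => hq_le i]
  have hq₀_le : q 0 ≤ 1 := by rw [hq₀]; linarith [sum_nonneg fun i (_ : i ∈ univ) => hq_nonneg i]
  rw [Fin.sum_univ_succ]
  simp only [hq, mul_logb_div_div_rpow two_pos one_lt_two.ne']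
  linarith [neg_one_lt_mul_logb_div hp₀ hq₀_pos hq₀_le]

lemma sum_sub_one_div_pow_add_two (a : ℝ) (ha : a ≠ 0) (m : ℕ) :
    ∑ j : Fin m, (a - 1) / a ^ (j.val + 2) + 1 / a ^ (m + 1) = 1 / a := by
  induction m with
  | zero => simp
  | succ m ih =>
    rw [Fin.sum_univ_castSucc, ← ih]
    simp only [Fin.val_castSucc, Fin.val_last]
    field_simp
    ring

/-- The weights `p₂, …, pₙ` for `n = m + 2`, indexed from `0`. -/
noncomputable def tailWeights (a : ℝ) (m : ℕ) : Fin (m + 1) → ℝ :=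
  Fin.lastCases (1 / a ^ (m + 1)) fun j => (a - 1) / a ^ (j.val + 2)

lemma tailWeights_nonneg {a : ℝ} (ha : 1 ≤ a) (m : ℕ) (i : Fin (m + 1)) :
    0 ≤ tailWeights a m i := by
  have : 0 ≤ a - 1 := sub_nonneg.mpr ha
  induction i using Fin.lastCases <;> simp only [tailWeights, Fin.lastCases_last,
    Fin.lastCases_castSucc] <;> positivity

lemma sum_tailWeights {a : ℝ} (ha : a ≠ 0) (m : ℕ) : ∑ i, tailWeights a m i = 1 / a := by
  simpa [tailWeights, Fin.sum_univ_castSucc] using sum_sub_one_div_pow_add_two a ha m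

lemma sum_tailWeights_mul_pow {a : ℝ} (ha : a ≠ 0) (k : ℝ) (m : ℕ) :
    ∑ i, tailWeights a m i * (k * a ^ (i.val + 1)) = m * (k * (a - 1) / a) + k := by
  have hmid : ∀ j : Fin m, (a - 1) / a ^ (j.val + 2) * (k * a ^ (j.val + 1)) = k * (a - 1) / a :=
    fun j => by field_simp; ring
  simp only [tailWeights, Fin.sum_univ_castSucc, Fin.lastCases_castSucc, Fin.lastCases_last,
    Fin.val_castSucc, Fin.val_last, hmid, sum_const, card_univ, Fintype.card_fin, nsmul_eq_mul]
  field_simp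

/-- For the explicit distributions `p₁ = (a-1)/a`, `pᵢ = (a-1)/aⁱ`
(`2 ≤ i ≤ n-1`), `pₙ = 1/a^(n-1)`, and `qᵢ = pᵢ / 2^(k·a^(i-1))` for `i ≥ 2`,
`q₁ = 1 - ∑_{i≥2} qᵢ` (paper index `i = i.val + 1` for `i : Fin n`), the
relative entropy satisfies `S(P|Q) > -1 + (n-2)·k(a-1)/a + k`, and this lower
bound equals `k(n-1) - k(n-2)/a - 1`. -/
theorem stmt7 (a : ℝ) (ha : 1 < a) (k : ℝ) (hk : 0 < k) (n : ℕ) (hn : 2 ≤ n)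
    (p q : Fin n → ℝ)
    (hp1 : p ⟨0, by omega⟩ = (a - 1) / a)
    (hpmid : ∀ i : Fin n, 2 ≤ i.val + 1 → i.val + 1 ≤ n - 1 →
      p i = (a - 1) / a ^ (i.val + 1))
    (hpn : p ⟨n - 1, by omega⟩ = 1 / a ^ (n - 1))
    (hq : ∀ i : Fin n, 2 ≤ i.val + 1 → q i = p i / (2 : ℝ) ^ (k * a ^ i.val))
    (hq1 : q ⟨0, by omega⟩ = 1 - ∑ i ∈ univ.filter (fun i : Fin n => 2 ≤ i.val + 1), q i) :
    (∑ i, p i * Real.logb 2 (p i / q i)) >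
        -1 + ((n : ℝ) - 2) * (k * (a - 1) / a) + k ∧
      -1 + ((n : ℝ) - 2) * (k * (a - 1) / a) + k =
        k * ((n : ℝ) - 1) - k * ((n : ℝ) - 2) / a - 1 := by
  have ha₀ : a ≠ 0 := by positivity
  refine ⟨?_, by field_simp; ring⟩
  obtain ⟨m, rfl⟩ : ∃ m, n = m + 2 := ⟨n - 2, by omega⟩
  have htail : ∀ i : Fin (m + 1), p i.succ = tailWeights a m i := by
    intro i
    induction i using Fin.lastCases with
    | last =>
      rw [show (Fin.last m).succ = ⟨m + 2 - 1, by omega⟩ from rfl, hpn]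
      simp [tailWeights]
    | cast j =>
      rw [hpmid _ (by simp) (by simp)]
      simp [tailWeights]
  have hq₀ : q 0 = 1 - ∑ i : Fin (m + 1), q i.succ := by
    simpa [sum_filter, Fin.sum_univ_succ] using hq1
  have hp₀ : 0 < p 0 := by
    rw [show (0 : Fin (m + 2)) = ⟨0, by omega⟩ from rfl, hp1]
    exact div_pos (by linarith) (by linarith)
  have htail_lt_one : ∑ i : Fin (m + 1), p i.succ < 1 := by
    simpa [htail, sum_tailWeights ha₀] using (div_lt_one (by positivity)).mpr ha
  have hbound := neg_one_add_sum_lt_sum_mul_logb_div p q (fun i => k * a ^ (i.val + 1)) hp₀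
    (fun i => htail i ▸ tailWeights_nonneg ha.le m i) (fun i => by positivity) htail_lt_one
    (fun i => by simpa using hq i.succ (by simp)) hq₀
  simp only [htail, sum_tailWeights_mul_pow ha₀] at hbound
  push_cast at hbound ⊢
  linarith
end

section
/- Let P and Q be probability distributions on [n] with Q(i) > 0 for all i. If P and Q satisfy the classical k-substate property for some k ≥ 0, then D(P|Q) ≤ 2k + 2. -/
open Finset

/-- Converse of the substate theorem for classical distributions: if `P`, `Q`
satisfy the classical `k`-substate property for some `k ≥ 0`, then
`D(P|Q) ≤ 2k + 2`. -/
theorem stmt8 (n : ℕ) (P Q : Fin n → ℝ)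
    (hP0 : ∀ i, 0 ≤ P i) (hP1 : ∑ i, P i = 1)
    (hQ0 : ∀ i, 0 < Q i) (hQ1 : ∑ i, Q i = 1)
    (k : ℝ) (hk : 0 ≤ k) (hsub : SubstateProperty n P Q k) :
    (⨆ S : Finset (Fin n),
        (∑ i ∈ S, P i) * Real.logb 2 ((∑ i ∈ S, P i) / (∑ i ∈ S, Q i))) ≤
      2 * k + 2 := by
  apply ciSup_le
  intro S
  set p := ∑ i ∈ S, P i with hp_def
  set q := ∑ i ∈ S, Q i with hq_def
  have hp0 : 0 ≤ p := Finset.sum_nonneg fun i _ => hP0 i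
  by_cases hp : p = 0
  · rw [hp]; simp; linarith
  have hppos : 0 < p := lt_of_le_of_ne hp0 (Ne.symm hp)
  have hp1 : p ≤ 1 := by
    rw [← hP1]
    exact Finset.sum_le_sum_of_subset_of_nonneg (Finset.subset_univ S)
      (fun i _ _ => hP0 i)
  set r := 2 / p with hr_def
  have hr1 : 1 < r := by
    rw [hr_def]
    rw [lt_div_iff₀ hppos]
    linarith
  have hrpos : 0 < r := lt_trans one_pos hr1
  obtain ⟨Pr, hPr0, hPr1, hL1, hdom⟩ := hsub r hr1
  -- Pr(S) ≥ p - 1/r = p/2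
  have hsum0 : ∑ i ∈ S, (P i - Pr i) + ∑ i ∈ Sᶜ, (P i - Pr i) = 0 := by
    rw [Finset.sum_add_sum_compl, Finset.sum_sub_distrib, hP1, hPr1]
    ring
  have habs : |∑ i ∈ S, (P i - Pr i)| + |∑ i ∈ Sᶜ, (P i - Pr i)| ≤ 2 / r := by
    calc |∑ i ∈ S, (P i - Pr i)| + |∑ i ∈ Sᶜ, (P i - Pr i)|
        ≤ (∑ i ∈ S, |P i - Pr i|) + ∑ i ∈ Sᶜ, |P i - Pr i| :=
          add_le_add (Finset.abs_sum_le_sum_abs _ _) (Finset.abs_sum_le_sum_abs _ _)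
      _ = ∑ i, |P i - Pr i| := Finset.sum_add_sum_compl S _
      _ ≤ 2 / r := hL1
  have hkey : p - 1 / r ≤ ∑ i ∈ S, Pr i := by
    have h2 : |∑ i ∈ S, (P i - Pr i)| ≤ 1 / r := by
      have : |∑ i ∈ Sᶜ, (P i - Pr i)| = |∑ i ∈ S, (P i - Pr i)| := by
        rw [show ∑ i ∈ Sᶜ, (P i - Pr i) = -∑ i ∈ S, (P i - Pr i) by linarith, abs_neg]
      rw [this] at habs
      rw [div_eq_mul_inv 2 r] at habs
      rw [div_eq_mul_inv]
      nlinarith [abs_nonneg (∑ i ∈ S, (P i - Pr i))]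
    have h3 : ∑ i ∈ S, (P i - Pr i) ≤ 1 / r := le_trans (le_abs_self _) h2
    rw [Finset.sum_sub_distrib] at h3
    linarith
  have hhalf : (1:ℝ) / r = p / 2 := by
    rw [hr_def]; field_simp
  have hPrS : p / 2 ≤ ∑ i ∈ S, Pr i := by rw [hhalf] at hkey; linarith
  -- Q(S) lower bound
  have hpow : (0:ℝ) < (2:ℝ) ^ (r * k) := Real.rpow_pos_of_pos two_pos _
  have hQS : p / 4 / (2:ℝ) ^ (r * k) ≤ q := by
    have h1 : ∑ i ∈ S, (1 - 1 / r) * Pr i / (2:ℝ) ^ (r * k) ≤ q :=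
      Finset.sum_le_sum fun i _ => hdom i
    have h2 : (1 - 1 / r) * (∑ i ∈ S, Pr i) / (2:ℝ) ^ (r * k)
        = ∑ i ∈ S, (1 - 1 / r) * Pr i / (2:ℝ) ^ (r * k) := by
      rw [Finset.mul_sum, Finset.sum_div]
    have hr_half : (1:ℝ)/2 ≤ 1 - 1 / r := by rw [hhalf]; linarith
    have hPrS0 : 0 ≤ ∑ i ∈ S, Pr i := Finset.sum_nonneg fun i _ => hPr0 i
    have h3 : p / 4 ≤ (1 - 1 / r) * (∑ i ∈ S, Pr i) := by
      nlinarith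
    calc p / 4 / (2:ℝ) ^ (r * k)
        ≤ (1 - 1 / r) * (∑ i ∈ S, Pr i) / (2:ℝ) ^ (r * k) := by gcongr
      _ = _ := h2
      _ ≤ q := h1
  have hq0 : 0 < q := lt_of_lt_of_le (by positivity) hQS
  -- final bound
  have hlog : Real.logb 2 (p / q) ≤ 2 + r * k := by
    have h1 : p / q ≤ 4 * (2:ℝ) ^ (r * k) := by
      rw [div_le_iff₀ hq0]
      calc p = p / 4 / (2:ℝ) ^ (r * k) * (4 * (2:ℝ) ^ (r * k)) := by
            field_simp
        _ ≤ q * (4 * (2:ℝ) ^ (r * k)) := by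
            apply mul_le_mul_of_nonneg_right hQS; positivity
        _ = 4 * (2:ℝ) ^ (r * k) * q := by ring
    calc Real.logb 2 (p / q) ≤ Real.logb 2 (4 * (2:ℝ) ^ (r * k)) := by
          exact Real.logb_le_logb_of_le one_lt_two (by positivity) h1
      _ = Real.logb 2 4 + Real.logb 2 ((2:ℝ) ^ (r * k)) := by
          rw [Real.logb_mul (by norm_num) (ne_of_gt hpow)]
      _ = 2 + r * k := by
          have h4 : Real.logb 2 4 = 2 := by
            rw [show (4:ℝ) = 2^(2:ℕ) by norm_num, Real.logb_pow,
              Real.logb_self_eq_one] <;> norm_num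
          rw [Real.logb_rpow two_pos (by norm_num), h4]
  have hrk : p * (r * k) = 2 * k := by
    rw [hr_def]; field_simp
  calc p * Real.logb 2 (p / q) ≤ p * (2 + r * k) :=
        mul_le_mul_of_nonneg_left hlog hp0
    _ = 2 * p + p * (r * k) := by ring
    _ = 2 * p + 2 * k := by rw [hrk]
    _ ≤ 2 * k + 2 := by linarith
end

section
/- Let P and Q be probability distributions on [n] with Q(i) > 0 for all i and let k = D(P|Q). Suppose the indices are ordered so that the values xᵢ = log₂(P(i)/Q(i)) are strictly increasing. Then Σ_{i : xᵢ > 0} P(i) xᵢ ≤ k(n-1), and consequently S(P|Q) ≤ Σ_{i : xᵢ > 0} P(i) xᵢ ≤ k(n-1). -/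
open Finset

/-- Let `P`, `Q` be distributions on `Fin n` with `Q` positive, `k = D(P|Q)`,
and suppose the values `xᵢ = log₂ (P i / Q i)` are strictly increasing in `i`.
Then `∑_{i : xᵢ > 0} P i · xᵢ ≤ k(n-1)`, and consequently
`S(P|Q) ≤ ∑_{i : xᵢ > 0} P i · xᵢ ≤ k(n-1)`. -/
theorem stmt15 (n : ℕ) (P Q : Fin n → ℝ)
    (hP0 : ∀ i, 0 ≤ P i) (hP1 : ∑ i, P i = 1)
    (hQ0 : ∀ i, 0 < Q i) (hQ1 : ∑ i, Q i = 1)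
    (k : ℝ)
    (hk : k = ⨆ S : Finset (Fin n),
        (∑ i ∈ S, P i) * Real.logb 2 ((∑ i ∈ S, P i) / (∑ i ∈ S, Q i)))
    (hmono : StrictMono (fun i : Fin n => Real.logb 2 (P i / Q i))) :
    (∑ i ∈ univ.filter (fun i : Fin n => 0 < Real.logb 2 (P i / Q i)),
        P i * Real.logb 2 (P i / Q i)) ≤ k * ((n : ℝ) - 1) ∧
    (∑ i, P i * Real.logb 2 (P i / Q i)) ≤
      ∑ i ∈ univ.filter (fun i : Fin n => 0 < Real.logb 2 (P i / Q i)),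
        P i * Real.logb 2 (P i / Q i) := by
  have hn : 0 < n := by
    by_contra h
    push_neg at h
    interval_cases n
    simp at hP1
  haveI : Nonempty (Fin n) := Fin.pos_iff_nonempty.mp hn
  set f : Finset (Fin n) → ℝ := fun S =>
    (∑ i ∈ S, P i) * Real.logb 2 ((∑ i ∈ S, P i) / (∑ i ∈ S, Q i)) with hf
  have hbdd : BddAbove (Set.range f) := Set.Finite.bddAbove (Set.finite_range f)
  have hk0 : 0 ≤ k := by
    have h := le_ciSup hbdd (∅ : Finset (Fin n))
    rw [hk]
    simpa [hf] using h
  have key : ∀ i : Fin n, 0 < Real.logb 2 (P i / Q i) →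
      P i * Real.logb 2 (P i / Q i) ≤ k := by
    intro i hi
    have hQi := hQ0 i
    have hc1 : 1 < P i / Q i := by
      by_contra h
      push_neg at h
      have : Real.logb 2 (P i / Q i) ≤ 0 :=
        Real.logb_nonpos one_lt_two (div_nonneg (hP0 i) hQi.le) h
      linarith
    set S : Finset (Fin n) := univ.filter (fun j : Fin n => i ≤ j) with hS
    have hiS : i ∈ S := by simp [hS]
    have hQS : 0 < ∑ j ∈ S, Q j :=
      Finset.sum_pos (fun j _ => hQ0 j) ⟨i, hiS⟩
    have hge : ∀ j ∈ S, (P i / Q i) * Q j ≤ P j := by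
      intro j hj
      have hij : i ≤ j := by simpa [hS] using hj
      have hxj : Real.logb 2 (P i / Q i) ≤ Real.logb 2 (P j / Q j) := by
        rcases eq_or_lt_of_le hij with rfl | h
        · exact le_refl _
        · exact (hmono h).le
      have hcj : 1 < P j / Q j := by
        by_contra h
        push_neg at h
        have : Real.logb 2 (P j / Q j) ≤ 0 :=
          Real.logb_nonpos one_lt_two (div_nonneg (hP0 j) (hQ0 j).le) h
        linarith
      have hle : P i / Q i ≤ P j / Q j :=
        (Real.logb_le_logb one_lt_two (by linarith) (by linarith)).mp hxj
      have := (le_div_iff₀ (hQ0 j)).mp hle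
      linarith
    have hsum : (P i / Q i) * ∑ j ∈ S, Q j ≤ ∑ j ∈ S, P j := by
      have := Finset.sum_le_sum hge
      rwa [← Finset.mul_sum] at this
    have hPS : 0 < ∑ j ∈ S, P j := lt_of_lt_of_le (by positivity) hsum
    have hdiv : P i / Q i ≤ (∑ j ∈ S, P j) / (∑ j ∈ S, Q j) :=
      (le_div_iff₀ hQS).mpr hsum
    have hlogb : Real.logb 2 (P i / Q i) ≤
        Real.logb 2 ((∑ j ∈ S, P j) / (∑ j ∈ S, Q j)) :=
      (Real.logb_le_logb one_lt_two (by linarith) (by linarith)).mpr hdiv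
    have hPle : P i ≤ ∑ j ∈ S, P j :=
      Finset.single_le_sum (fun j _ => hP0 j) hiS
    have h1 : P i * Real.logb 2 (P i / Q i) ≤ f S := by
      exact mul_le_mul hPle hlogb hi.le hPS.le
    have h2 : f S ≤ k := by rw [hk]; exact le_ciSup hbdd S
    linarith
  obtain ⟨i0, hi0⟩ : ∃ i0 : Fin n, P i0 ≤ Q i0 := by
    by_contra h
    push_neg at h
    have : ∑ i, Q i < ∑ i, P i :=
      Finset.sum_lt_sum_of_nonempty univ_nonempty (fun i _ => h i)
    rw [hP1, hQ1] at this
    exact lt_irrefl 1 this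
  have hx0 : Real.logb 2 (P i0 / Q i0) ≤ 0 :=
    Real.logb_nonpos one_lt_two (div_nonneg (hP0 i0) (hQ0 i0).le)
      ((div_le_one (hQ0 i0)).mpr hi0)
  set T : Finset (Fin n) :=
    univ.filter (fun i : Fin n => 0 < Real.logb 2 (P i / Q i)) with hT
  have hTsub : T ⊆ univ.erase i0 := by
    intro j hj
    rw [Finset.mem_erase]
    refine ⟨?_, mem_univ j⟩
    rintro rfl
    have := (mem_filter.mp hj).2
    linarith
  have hcard : T.card ≤ n - 1 := by
    have := Finset.card_le_card hTsub
    simpa using this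
  have hcardR : (T.card : ℝ) ≤ (n : ℝ) - 1 := by
    have h1 : (T.card : ℝ) ≤ ((n - 1 : ℕ) : ℝ) := by exact_mod_cast hcard
    have : ((n - 1 : ℕ) : ℝ) = (n : ℝ) - 1 := by
      rw [Nat.cast_sub hn]; simp
    linarith
  constructor
  · have h1 : ∑ i ∈ T, P i * Real.logb 2 (P i / Q i) ≤ ∑ i ∈ T, k :=
      Finset.sum_le_sum (fun i hi => key i (mem_filter.mp hi).2)
    rw [Finset.sum_const, nsmul_eq_mul] at h1
    have h2 : (T.card : ℝ) * k ≤ ((n : ℝ) - 1) * k :=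
      mul_le_mul_of_nonneg_right hcardR hk0
    calc ∑ i ∈ T, P i * Real.logb 2 (P i / Q i) ≤ (T.card : ℝ) * k := h1
      _ ≤ ((n : ℝ) - 1) * k := h2
      _ = k * ((n : ℝ) - 1) := mul_comm _ _
  · have hsplit := Finset.sum_filter_add_sum_filter_not univ
      (fun i : Fin n => 0 < Real.logb 2 (P i / Q i))
      (fun i => P i * Real.logb 2 (P i / Q i))
    have hneg : ∑ i ∈ univ.filter (fun i : Fin n =>
        ¬ 0 < Real.logb 2 (P i / Q i)), P i * Real.logb 2 (P i / Q i) ≤ 0 := by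
      apply Finset.sum_nonpos
      intro i hi
      have := (mem_filter.mp hi).2
      push_neg at this
      exact mul_nonpos_of_nonneg_of_nonpos (hP0 i) this
    rw [← hsplit]
    simpa [hT] using hneg
end

section
/- Let P and Q be probability distributions on [n] with Q(i) > 0 for all i, satisfying the classical k-substate property, and let M : [n] → [0,1] be any test (fuzzy event). Set p = Σᵢ M(i)P(i), q = Σᵢ M(i)Q(i), and take r = 2/p (assuming p > 0). If P_r witnesses the substate property for this r, then p_r := Σᵢ M(i)P_r(i) ≥ p/2 and q ≥ (1/2)·p/2^{rk+1}, hence p log₂(p/q) ≤ 2k + 2. -/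
open Finset

/-!
Writing `M - 1/2 ∈ [-1/2, 1/2]` against the mass-zero signed measure `P - P_r` shows that a test
moves by at most half the `ℓ¹` distance, so `r = 2/p` forces `p_r ≥ p/2`. The substate inequality,
summed against `M`, then gives `q ≥ (1 - 1/r) p_r / 2^{rk} ≥ p / 2^{rk+2}`, and
`p log₂ (p/q) ≤ p (rk + 2) = 2k + 2p ≤ 2k + 2`.
-/

section FuzzyTest

variable {ι : Type*} [Fintype ι] {M : ι → ℝ}

theorem sum_mul_le_sum_of_le_one {P : ι → ℝ} (hP : ∀ i, 0 ≤ P i) (hM : ∀ i, M i ≤ 1) :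
    ∑ i, M i * P i ≤ ∑ i, P i :=
  sum_le_sum fun i _ => mul_le_of_le_one_left (hP i) (hM i)

theorem sub_one_half_mul_le_abs_div_two {m : ℝ} (hm : 0 ≤ m ∧ m ≤ 1) (x : ℝ) :
    (m - 1 / 2) * x ≤ |x| / 2 :=
  calc (m - 1 / 2) * x ≤ |m - 1 / 2| * |x| := (le_abs_self _).trans (abs_mul _ _).le
    _ ≤ 1 / 2 * |x| := by gcongr; exact abs_le.2 ⟨by linarith, by linarith⟩
    _ = |x| / 2 := by ring

theorem sum_mul_sub_sum_mul_le_half_sum_abs {P P' : ι → ℝ} (hM : ∀ i, 0 ≤ M i ∧ M i ≤ 1)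
    (hmass : ∑ i, P i = ∑ i, P' i) :
    ∑ i, M i * P i - ∑ i, M i * P' i ≤ (∑ i, |P i - P' i|) / 2 := by
  have hzero : ∑ i, (P i - P' i) = 0 := by rw [sum_sub_distrib, hmass, sub_self]
  calc ∑ i, M i * P i - ∑ i, M i * P' i
      = ∑ i, (M i - 1 / 2) * (P i - P' i) + (∑ i, (P i - P' i)) / 2 := by
        rw [sum_div, ← sum_add_distrib, ← sum_sub_distrib]
        exact sum_congr rfl fun i _ => by ring
    _ ≤ (∑ i, |P i - P' i|) / 2 := by
        rw [hzero, zero_div, add_zero, sum_div]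
        exact sum_le_sum fun i _ => sub_one_half_mul_le_abs_div_two (hM i) _

theorem mul_sum_mul_le_sum_mul {P Q : ι → ℝ} {c : ℝ} (hM : ∀ i, 0 ≤ M i)
    (hPQ : ∀ i, c * P i ≤ Q i) :
    c * ∑ i, M i * P i ≤ ∑ i, M i * Q i := by
  rw [mul_sum]
  exact sum_le_sum fun i _ => by
    rw [mul_left_comm]
    exact mul_le_mul_of_nonneg_left (hPQ i) (hM i)

end FuzzyTest

theorem Real.logb_div_le_of_div_rpow_le {b p q x : ℝ} (hb : 1 < b) (hp : 0 < p)
    (h : p / b ^ x ≤ q) : Real.logb b (p / q) ≤ x := by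
  have hbx : 0 < b ^ x := Real.rpow_pos_of_pos (by linarith) x
  have hq : 0 < q := (div_pos hp hbx).trans_le h
  rw [Real.logb_le_iff_le_rpow hb (div_pos hp hq), div_le_iff₀ hq, mul_comm]
  exact (div_le_iff₀ hbx).1 h

theorem stmt17_general (n : ℕ) (P Q : Fin n → ℝ)
    (hP0 : ∀ i, 0 ≤ P i) (hP1 : ∑ i, P i = 1)
    (k : ℝ)
    (M : Fin n → ℝ) (hM : ∀ i, 0 ≤ M i ∧ M i ≤ 1)
    (p q r : ℝ)
    (hp : p = ∑ i, M i * P i) (hppos : 0 < p)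
    (hq : q = ∑ i, M i * Q i)
    (hr : r = 2 / p)
    (Pr : Fin n → ℝ)
    (hPr1 : ∑ i, Pr i = 1)
    (hPrclose : (∑ i, |P i - Pr i|) ≤ 2 / r)
    (hPrsub : ∀ i, (1 - 1 / r) * Pr i / (2 : ℝ) ^ (r * k) ≤ Q i) :
    (∑ i, M i * Pr i) ≥ p / 2 ∧
    q ≥ (1 / 2) * (p / (2 : ℝ) ^ (r * k + 1)) ∧
    p * Real.logb 2 (p / q) ≤ 2 * k + 2 := by
  have hp1 : p ≤ 1 := hp ▸ hP1 ▸ sum_mul_le_sum_of_le_one hP0 fun i => (hM i).2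
  have hrp : 2 / r = p := by rw [hr, div_div_cancel₀ two_ne_zero]
  have hpr : p / 2 ≤ ∑ i, M i * Pr i := by
    have := sum_mul_sub_sum_mul_le_half_sum_abs hM (hP1.trans hPr1.symm)
    linarith
  have hq_ge : (1 - 1 / r) / 2 ^ (r * k) * ∑ i, M i * Pr i ≤ q :=
    hq ▸ mul_sum_mul_le_sum_mul (fun i => (hM i).1) fun i => by
      rw [div_mul_eq_mul_div]; exact hPrsub i
  have hhalf : 1 / 2 ≤ 1 - 1 / r := by rw [hr, one_div_div]; linarith
  have hpow : ∀ a : ℝ, (2 : ℝ) ^ (r * k + a) = 2 ^ (r * k) * 2 ^ a :=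
    fun a => Real.rpow_add two_pos _ _
  have hqlow : p / 2 ^ (r * k + 2) ≤ q :=
    calc p / 2 ^ (r * k + 2) = 1 / 2 / 2 ^ (r * k) * (p / 2) := by
          rw [hpow, Real.rpow_two]; ring
      _ ≤ (1 - 1 / r) / 2 ^ (r * k) * ∑ i, M i * Pr i :=
          mul_le_mul (by gcongr) hpr (by positivity) (div_nonneg (by linarith) (by positivity))
      _ ≤ q := hq_ge
  refine ⟨hpr, ?_, ?_⟩
  · calc 1 / 2 * (p / 2 ^ (r * k + 1)) = p / 2 ^ (r * k + 2) := by
          rw [hpow, hpow, Real.rpow_one, Real.rpow_two]; ring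
      _ ≤ q := hqlow
  · calc p * Real.logb 2 (p / q) ≤ p * (r * k + 2) := by
          gcongr
          exact Real.logb_div_le_of_div_rpow_le one_lt_two hppos hqlow
      _ = 2 * k + 2 * p := by rw [hr]; field_simp
      _ ≤ 2 * k + 2 := by linarith

/-- Let `P`, `Q` satisfy the classical `k`-substate property, `M : [n] → [0,1]`
a fuzzy test, `p = ∑ M i * P i > 0`, `q = ∑ M i * Q i`, and `r = 2/p`. If
`P_r` is a witness of the substate property for this `r`, then
`p_r = ∑ M i * P_r i ≥ p/2`, `q ≥ (1/2) * p / 2^(r*k+1)`, and hence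
`p * log₂ (p/q) ≤ 2k + 2`. -/
theorem stmt17 (n : ℕ) (P Q : Fin n → ℝ)
    (hP0 : ∀ i, 0 ≤ P i) (hP1 : ∑ i, P i = 1)
    (hQ0 : ∀ i, 0 < Q i) (hQ1 : ∑ i, Q i = 1)
    (k : ℝ) (hk : 0 ≤ k) (hsub : SubstateProperty n P Q k)
    (M : Fin n → ℝ) (hM : ∀ i, 0 ≤ M i ∧ M i ≤ 1)
    (p q r : ℝ)
    (hp : p = ∑ i, M i * P i) (hppos : 0 < p)
    (hq : q = ∑ i, M i * Q i)
    (hr : r = 2 / p)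
    (Pr : Fin n → ℝ)
    (hPr0 : ∀ i, 0 ≤ Pr i) (hPr1 : ∑ i, Pr i = 1)
    (hPrclose : (∑ i, |P i - Pr i|) ≤ 2 / r)
    (hPrsub : ∀ i, (1 - 1 / r) * Pr i / (2 : ℝ) ^ (r * k) ≤ Q i) :
    (∑ i, M i * Pr i) ≥ p / 2 ∧
    q ≥ (1 / 2) * (p / (2 : ℝ) ^ (r * k + 1)) ∧
    p * Real.logb 2 (p / q) ≤ 2 * k + 2 :=
  stmt17_general n P Q hP0 hP1 k M hM p q r hp hppos hq hr Pr hPr1 hPrclose hPrsub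
end

section
/- For a parameter a > 1, k > 0, n ≥ 3, let P and Q be the explicit distributions: p₁ = (a-1)/a, pᵢ = (a-1)/aⁱ (2 ≤ i ≤ n-1), pₙ = 1/a^{n-1}; qᵢ = pᵢ/2^{k a^{i-1}} (i ≥ 2), q₁ = 1 - Σ_{i=2}^n qᵢ. Then for every r > 1 of the form r = a^{m} for integer m with 1 ≤ m ≤ n-1, the truncated distribution P̃ = (p₁, …, p_{m+1}, 0, …, 0)/normalization satisfies ‖P - P̃‖₁ ≤ 2/r and (1 - 1/r) P̃(i)/2^{rk} ≤ Q(i) for all i. -/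
open Finset

/-!
`P` is geometric of ratio `1/a`: its mass beyond the first `m + 1` atoms is at most
`a^{-(m+1)} ≤ 1/r`, so the normalising constant `c` of the truncation is at least `1 - 1/r`.
Normalising a restriction of a probability vector moves exactly `1 - c` of mass in each
direction, whence `‖P - P̃‖₁ = 2(1 - c)`, and `(1 - 1/r) P̃ ≤ P`. Finally
`qᵢ ≥ pᵢ / 2^{k a^{i-1}}` (for `i = 1` because every other `qⱼ` is at most `pⱼ`), and on the
support of `P̃` the exponent `k a^{i-1}` is at most `r k`.
-/

lemma sum_abs_sub_ite_div_sum_filter {ι : Type*} [Fintype ι] (P : ι → Prop) [DecidablePred P]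
    {p : ι → ℝ} (hp : ∀ i, 0 ≤ p i) (hsum : ∑ i, p i = 1)
    (hc : 0 < ∑ i ∈ univ.filter P, p i) :
    ∑ i, |p i - if P i then p i / ∑ j ∈ univ.filter P, p j else 0| =
      2 * (1 - ∑ i ∈ univ.filter P, p i) := by
  set c := ∑ i ∈ univ.filter P, p i
  have hsplit := sum_filter_add_sum_filter_not univ P p
  have hc1 : c ≤ 1 := by
    have := sum_nonneg fun i (_ : i ∈ univ.filter fun i => ¬P i) => hp i
    linarith
  have hin : ∀ i ∈ univ.filter P,
      |p i - if P i then p i / c else 0| = p i / c - p i := by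
    intro i hi
    rw [if_pos (mem_filter.mp hi).2, abs_sub_comm, abs_of_nonneg]
    exact sub_nonneg.mpr (le_div_self (hp i) hc hc1)
  have hout : ∀ i ∈ univ.filter fun i => ¬P i,
      |p i - if P i then p i / c else 0| = p i := by
    intro i hi
    rw [if_neg (mem_filter.mp hi).2, sub_zero, abs_of_nonneg (hp i)]
  rw [← sum_filter_add_sum_filter_not univ P, sum_congr rfl hin, sum_congr rfl hout,
    sum_sub_distrib, ← sum_div, div_self hc.ne']
  linarith

lemma sum_range_sub_div_pow {a : ℝ} (ha : a ≠ 0) (t : ℕ) :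
    ∑ j ∈ range t, (a - 1) / a ^ (j + 1) = 1 - 1 / a ^ t := by
  induction t with
  | zero => simp
  | succ t ih =>
    rw [sum_range_succ, ih]
    field_simp
    ring

/-- The geometric distribution `((a-1)/a, (a-1)/a², …)` on `Fin n`, with the tail beyond the last
atom lumped into it. -/
noncomputable def geomDist (a : ℝ) (n : ℕ) (i : Fin n) : ℝ :=
  if i.val + 1 < n then (a - 1) / a ^ (i.val + 1) else 1 / a ^ (n - 1)

section geomDist

variable {a : ℝ} {n : ℕ}

lemma mul_div_le_of_le_of_nonneg {t c x : ℝ} (htc : t ≤ c) (hc : 0 < c) (hx : 0 ≤ x) :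
    t * (x / c) ≤ x :=
  calc t * (x / c) ≤ c * (x / c) := by gcongr
    _ = x := mul_div_cancel₀ x hc.ne'

lemma eq_geomDist (hn : 2 ≤ n) {p : Fin n → ℝ} (hp1 : p ⟨0, by omega⟩ = (a - 1) / a)
    (hpmid : ∀ i : Fin n, 2 ≤ i.val + 1 → i.val + 1 ≤ n - 1 → p i = (a - 1) / a ^ (i.val + 1))
    (hpn : p ⟨n - 1, by omega⟩ = 1 / a ^ (n - 1)) :
    p = geomDist a n := by
  funext i
  unfold geomDist
  split_ifs with hi
  · obtain h0 | h0 := Nat.eq_zero_or_pos i.val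
    · rw [show i = ⟨0, by omega⟩ from Fin.ext h0, hp1, zero_add, pow_one]
    · exact hpmid i (by omega) (by omega)
  · rw [show i = ⟨n - 1, by omega⟩ from Fin.ext (show i.val = n - 1 by omega), hpn]

lemma geomDist_pos (ha : 1 < a) (i : Fin n) : 0 < geomDist a n i := by
  unfold geomDist
  split_ifs <;> exact div_pos (by linarith) (pow_pos (by linarith) _)

lemma sum_geomDist (ha : a ≠ 0) (hn : 0 < n) : ∑ i, geomDist a n i = 1 := by
  obtain ⟨n, rfl⟩ := Nat.exists_eq_add_one_of_ne_zero hn.ne'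
  rw [Fin.sum_univ_castSucc]
  simp only [geomDist, Fin.val_castSucc, Fin.val_last, add_lt_add_iff_right, Fin.is_lt,
    if_true, lt_irrefl, if_false, add_tsub_cancel_right]
  rw [Fin.sum_univ_eq_sum_range (fun j => (a - 1) / a ^ (j + 1)), sum_range_sub_div_pow ha]
  ring

lemma sum_filter_geomDist_of_lt (ha : a ≠ 0) {t : ℕ} (ht : t < n) :
    ∑ i ∈ univ.filter (fun i : Fin n => i.val + 1 ≤ t), geomDist a n i = 1 - 1 / a ^ t := by
  have hval : ∀ i ∈ univ.filter (fun i : Fin n => i.val + 1 ≤ t),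
      geomDist a n i = (a - 1) / a ^ (i.val + 1) := by
    intro i hi
    rw [geomDist, if_pos (by simp only [mem_filter, mem_univ, true_and] at hi; omega)]
  have hrange : (range n).filter (fun j => j + 1 ≤ t) = range t := by
    ext j
    simp only [mem_filter, mem_range]
    omega
  rw [sum_congr rfl hval, sum_filter,
    Fin.sum_univ_eq_sum_range (fun j => if j + 1 ≤ t then (a - 1) / a ^ (j + 1) else 0),
    ← sum_filter, hrange, sum_range_sub_div_pow ha]

lemma one_sub_div_pow_le_sum_filter_geomDist (ha : 1 < a) (hn : 0 < n) (t : ℕ) :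
    1 - 1 / a ^ t ≤ ∑ i ∈ univ.filter (fun i : Fin n => i.val + 1 ≤ t), geomDist a n i := by
  have ha0 : a ≠ 0 := by positivity
  by_cases ht : t < n
  · exact (sum_filter_geomDist_of_lt ha0 ht).ge
  · have hfull : univ.filter (fun i : Fin n => i.val + 1 ≤ t) = univ :=
      filter_true_of_mem fun i _ => by omega
    rw [hfull, sum_geomDist ha0 hn]
    have : 0 < 1 / a ^ t := by positivity
    linarith

lemma geomDist_div_two_rpow_le {k : ℝ} (ha : 1 < a) (hk : 0 ≤ k) (hn : 0 < n) {q : Fin n → ℝ}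
    (hq : ∀ i : Fin n, 2 ≤ i.val + 1 → q i = geomDist a n i / (2 : ℝ) ^ (k * a ^ i.val))
    (hq1 : q ⟨0, hn⟩ = 1 - ∑ i ∈ univ.filter (fun i : Fin n => 2 ≤ i.val + 1), q i)
    {i : Fin n} {s : ℝ} (hs : k * a ^ i.val ≤ s) :
    geomDist a n i / (2 : ℝ) ^ s ≤ q i := by
  refine (div_le_div_of_nonneg_left (geomDist_pos ha i).le (by positivity)
    (Real.rpow_le_rpow_of_exponent_le (by norm_num) hs)).trans ?_
  have hdamp : ∀ j : Fin n, geomDist a n j / (2 : ℝ) ^ (k * a ^ j.val) ≤ geomDist a n j :=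
    fun j => div_le_self (geomDist_pos ha j).le
      (Real.one_le_rpow (by norm_num) (mul_nonneg hk (pow_nonneg (by linarith) _)))
  by_cases hi : 2 ≤ i.val + 1
  · exact (hq i hi).ge
  obtain rfl : i = ⟨0, hn⟩ := Fin.ext (show i.val = 0 by omega)
  have hzero : univ.filter (fun j : Fin n => ¬2 ≤ j.val + 1) = {⟨0, hn⟩} := by
    ext j
    simp only [mem_filter, mem_univ, true_and, mem_singleton, Fin.ext_iff]
    omega
  have hsplit :=
    sum_filter_add_sum_filter_not univ (fun j : Fin n => 2 ≤ j.val + 1) (geomDist a n)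
  rw [hzero, sum_singleton, sum_geomDist (by positivity) hn] at hsplit
  have hqp : ∑ j ∈ univ.filter (fun j : Fin n => 2 ≤ j.val + 1), q j ≤
      ∑ j ∈ univ.filter (fun j : Fin n => 2 ≤ j.val + 1), geomDist a n j :=
    sum_le_sum fun j hj => (hq j (mem_filter.mp hj).2).trans_le (hdamp j)
  linarith [hdamp ⟨0, hn⟩]

end geomDist

/-- For the explicit distributions `p₁ = (a-1)/a`, `pᵢ = (a-1)/aⁱ`
(`2 ≤ i ≤ n-1`), `pₙ = 1/a^(n-1)`, `qᵢ = pᵢ/2^(k·a^(i-1))` (`i ≥ 2`),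
`q₁ = 1 - ∑_{i≥2} qᵢ` (paper index `i.val + 1`), and any `r = a^m` with
`1 ≤ m ≤ n-1`, the normalized truncation `P̃` of `p` to the first `m+1`
coordinates satisfies `‖p - P̃‖₁ ≤ 2/r` and
`(1 - 1/r) * P̃ i / 2^(r*k) ≤ q i` for all `i`. -/
theorem stmt18 (a : ℝ) (ha : 1 < a) (k : ℝ) (hk : 0 < k) (n : ℕ) (hn : 3 ≤ n)
    (p q : Fin n → ℝ)
    (hp1 : p ⟨0, by omega⟩ = (a - 1) / a)
    (hpmid : ∀ i : Fin n, 2 ≤ i.val + 1 → i.val + 1 ≤ n - 1 →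
      p i = (a - 1) / a ^ (i.val + 1))
    (hpn : p ⟨n - 1, by omega⟩ = 1 / a ^ (n - 1))
    (hq : ∀ i : Fin n, 2 ≤ i.val + 1 → q i = p i / (2 : ℝ) ^ (k * a ^ i.val))
    (hq1 : q ⟨0, by omega⟩ =
      1 - ∑ i ∈ univ.filter (fun i : Fin n => 2 ≤ i.val + 1), q i)
    (m : ℕ)
    (r : ℝ) (hr : r = a ^ m)
    (c : ℝ) (hc : c = ∑ i ∈ univ.filter (fun i : Fin n => i.val + 1 ≤ m + 1), p i)
    (Pt : Fin n → ℝ)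
    (hPt : ∀ i : Fin n, Pt i = if i.val + 1 ≤ m + 1 then p i / c else 0) :
    (∑ i, |p i - Pt i|) ≤ 2 / r ∧
    ∀ i, (1 - 1 / r) * Pt i / (2 : ℝ) ^ (r * k) ≤ q i := by
  obtain rfl := eq_geomDist (by omega) hp1 hpmid hpn
  obtain rfl : Pt = _ := funext hPt
  subst hr
  have hq_lb : ∀ {i : Fin n} {s : ℝ}, k * a ^ i.val ≤ s → geomDist a n i / (2 : ℝ) ^ s ≤ q i :=
    geomDist_div_two_rpow_le ha hk.le (by omega) hq hq1
  have htail : 1 / a ^ (m + 1) ≤ 1 / a ^ m :=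
    one_div_le_one_div_of_le (by positivity) (pow_le_pow_right₀ ha.le m.le_succ)
  have hc_lb : 1 - 1 / a ^ (m + 1) ≤ c :=
    hc ▸ one_sub_div_pow_le_sum_filter_geomDist ha (by omega) _
  have hc_pos : 0 < c := hc_lb.trans_lt' <| sub_pos.mpr <| (div_lt_one (by positivity)).mpr <|
    one_lt_pow₀ ha m.succ_ne_zero
  refine ⟨?_, fun i => ?_⟩
  · rw [hc, sum_abs_sub_ite_div_sum_filter _ (fun i => (geomDist_pos ha i).le)
      (sum_geomDist (by positivity) (by omega)) (hc ▸ hc_pos), ← hc]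
    linarith [div_eq_mul_one_div 2 (a ^ m)]
  dsimp only
  split_ifs with hi
  · calc (1 - 1 / a ^ m) * (geomDist a n i / c) / (2 : ℝ) ^ (a ^ m * k)
        ≤ geomDist a n i / (2 : ℝ) ^ (a ^ m * k) := by
          gcongr
          exact mul_div_le_of_le_of_nonneg (by linarith) hc_pos (geomDist_pos ha i).le
      _ ≤ q i := hq_lb <| by
          rw [mul_comm]
          exact mul_le_mul_of_nonneg_right (pow_le_pow_right₀ ha.le (by omega)) hk.le
  · rw [mul_zero, zero_div]
    exact (hq_lb le_rfl).trans' (div_nonneg (geomDist_pos ha i).le (by positivity))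
end
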